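/- arXiv:2004.00278 — 3 statements merged into one kernel-verified Lean document; each statement's English description precedes it below -/
import Mathlib

section
/- For all non-negative integers m and n with 0 ≤ m ≤ 2^n - 1, we have a(m+1)·a(2^n - m) - a(m)·a(2^n - (m+1)) = 1, where a is Stern's diatomic sequence. -/
/-- Stern's diatomic sequence: a(0)=0, a(1)=1, a(2m)=a(m), a(2m+1)=a(m)+a(m+1). -/
def stern : ℕ → ℕ
  | 0 => 0
  | 1 => 1
  | n + 2 =>
    if _h : n % 2 = 0 then stern (n / 2 + 1)
    else stern (n / 2 + 1) + stern (n / 2 + 2)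
decreasing_by
  · omega
  · omega
  · omega

/-! Put `j = 2^n - 1 - m`, so that the claim reads `a(m+1) a(j+1) = a(m) a(j) + 1` whenever
`m + j + 1 = 2^n`. For `m + j + 1 = 2^(n+1)` exactly one of `m`, `j` is even, and by symmetry
`m = 2k`, `j = 2l + 1` with `k + l + 1 = 2^n`; the two recurrences expand both products, and
their difference collapses to `a(k+1) a(l+1) - a(k) a(l)`, which is `1` by induction on `n`. -/

theorem stern_two_mul (k : ℕ) : stern (2 * k) = stern k := by
  rcases k with _ | k
  · rfl
  · rw [show 2 * (k + 1) = 2 * k + 2 by ring, stern]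
    simp

theorem stern_two_mul_add_one (k : ℕ) : stern (2 * k + 1) = stern k + stern (k + 1) := by
  rcases k with _ | k
  · simp [stern]
  · rw [show 2 * (k + 1) + 1 = 2 * k + 1 + 2 by ring, stern, dif_neg (by omega),
      show (2 * k + 1) / 2 = k by omega]

theorem stern_succ_mul_succ_of_even_of_odd {k l : ℕ}
    (h : stern (k + 1) * stern (l + 1) = stern k * stern l + 1) :
    stern (2 * k + 1) * stern (2 * l + 1 + 1) = stern (2 * k) * stern (2 * l + 1) + 1 := by
  rw [show 2 * l + 1 + 1 = 2 * (l + 1) by ring, stern_two_mul, stern_two_mul,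
    stern_two_mul_add_one, stern_two_mul_add_one]
  linear_combination h

theorem stern_succ_mul_succ (n : ℕ) {m j : ℕ} (h : m + j + 1 = 2 ^ n) :
    stern (m + 1) * stern (j + 1) = stern m * stern j + 1 := by
  induction n generalizing m j with
  | zero =>
    obtain ⟨rfl, rfl⟩ : m = 0 ∧ j = 0 := by rw [pow_zero] at h; omega
    simp [stern]
  | succ n ih =>
    wlog hm : Even m generalizing m j
    · rw [mul_comm, mul_comm (stern m)]
      exact this (by omega) (by grind)
    obtain ⟨k, rfl⟩ := hm
    rw [pow_succ] at h
    obtain ⟨l, rfl⟩ : ∃ l, j = 2 * l + 1 := ⟨j / 2, by omega⟩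
    rw [← two_mul]
    exact stern_succ_mul_succ_of_even_of_odd (ih (by omega))

theorem stern_det_one (m n : ℕ) (h : m ≤ 2 ^ n - 1) :
    stern (m + 1) * stern (2 ^ n - m) - stern m * stern (2 ^ n - (m + 1)) = 1 := by
  obtain ⟨j, hj⟩ : ∃ j, m + j + 1 = 2 ^ n :=
    ⟨2 ^ n - (m + 1), by have := n.one_le_two_pow; omega⟩
  rw [show 2 ^ n - m = j + 1 by omega, show 2 ^ n - (m + 1) = j by omega,
    stern_succ_mul_succ n hj, Nat.add_sub_cancel_left]
end

section
/- For every non-negative integer k and all non-negative integers m, n with 0 ≤ m ≤ 2^n - 1, we have k·a(m+1) + a(m) = a(2^k·m + 2^k - 1), where a is Stern's diatomic sequence. -/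
lemma stern_even (x : ℕ) : stern (2 * x) = stern x := by
  match x with
  | 0 => rfl
  | x + 1 =>
    have : 2 * (x + 1) = 2 * x + 2 := by ring
    rw [this, stern]
    simp [Nat.mul_div_cancel_left, Nat.mul_mod_right]

lemma stern_odd (x : ℕ) : stern (2 * x + 1) = stern x + stern (x + 1) := by
  match x with
  | 0 => simp [stern]
  | x + 1 =>
    have : 2 * (x + 1) + 1 = (2 * x + 1) + 2 := by ring
    rw [this, stern]
    have h1 : (2 * x + 1) % 2 = 1 := by omega
    have h2 : (2 * x + 1) / 2 = x := by omega
    simp [h1, h2]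

lemma stern_pow_mul (j x : ℕ) : stern (2 ^ j * x) = stern x := by
  induction j with
  | zero => simp
  | succ j ih =>
    have : 2 ^ (j + 1) * x = 2 * (2 ^ j * x) := by ring
    rw [this, stern_even, ih]

theorem stern_formula_one (k m n : ℕ) (h : m ≤ 2 ^ n - 1) :
    k * stern (m + 1) + stern m = stern (2 ^ k * m + 2 ^ k - 1) := by
  induction k with
  | zero => simp
  | succ k ih =>
    have hpos : 1 ≤ 2 ^ k := Nat.one_le_two_pow
    have h1 : 2 ^ (k + 1) * m + 2 ^ (k + 1) - 1 = 2 * (2 ^ k * m + 2 ^ k - 1) + 1 := by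
      have e1 : 2 ^ (k + 1) * m = 2 * (2 ^ k * m) := by ring
      have e2 : 2 ^ (k + 1) = 2 * 2 ^ k := by ring
      omega
    have h2 : 2 ^ k * m + 2 ^ k - 1 + 1 = 2 ^ k * (m + 1) := by
      have : 2 ^ k * (m + 1) = 2 ^ k * m + 2 ^ k := by ring
      omega
    rw [h1, stern_odd, h2, stern_pow_mul, ← ih]
    ring
end

section
/- Every matrix in SL(2,ℤ) with all entries non-negative is a product of the matrices [[1,1],[0,1]] and [[1,0],[1,1]] (an empty product giving the identity). -/
/-- The matrix [[1,1],[0,1]] as an element of SL(2,ℤ). -/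
def Smat : Matrix.SpecialLinearGroup (Fin 2) ℤ :=
  ⟨!![1, 1; 0, 1], by simp [Matrix.det_fin_two_of]⟩

/-- The matrix [[1,0],[1,1]] as an element of SL(2,ℤ). -/
def Tmat : Matrix.SpecialLinearGroup (Fin 2) ℤ :=
  ⟨!![1, 0; 1, 1], by simp [Matrix.det_fin_two_of]⟩

lemma Smat_pow (k : ℕ) : (Smat ^ k).1 = !![1, (k : ℤ); 0, 1] := by
  induction k with
  | zero =>
    ext i j
    fin_cases i <;> fin_cases j <;> simp [Matrix.one_apply]
  | succ n ih =>
    rw [pow_succ, Matrix.SpecialLinearGroup.coe_mul, ih]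
    ext i j
    fin_cases i <;> fin_cases j <;>
      simp [Smat, Matrix.mul_apply, Fin.sum_univ_two] <;> push_cast <;> ring

lemma Tmat_pow (k : ℕ) : (Tmat ^ k).1 = !![1, 0; (k : ℤ), 1] := by
  induction k with
  | zero =>
    ext i j
    fin_cases i <;> fin_cases j <;> simp [Matrix.one_apply]
  | succ n ih =>
    rw [pow_succ, Matrix.SpecialLinearGroup.coe_mul, ih]
    ext i j
    fin_cases i <;> fin_cases j <;>
      simp [Tmat, Matrix.mul_apply, Fin.sum_univ_two] <;> push_cast <;> ring

lemma sl2_key (n : ℕ) : ∀ A : Matrix.SpecialLinearGroup (Fin 2) ℤ,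
    (∀ i j, 0 ≤ A.1 i j) →
    A.1 0 0 + A.1 0 1 + A.1 1 0 + A.1 1 1 ≤ (n : ℤ) →
    A ∈ Submonoid.closure ({Smat, Tmat} : Set (Matrix.SpecialLinearGroup (Fin 2) ℤ)) := by
  induction n with
  | zero =>
    intro A hA hsum
    exfalso
    have hdet : A.1 0 0 * A.1 1 1 - A.1 0 1 * A.1 1 0 = 1 := by
      have := A.2; rw [Matrix.det_fin_two] at this; exact this
    have h00 := hA 0 0; have h01 := hA 0 1; have h10 := hA 1 0; have h11 := hA 1 1
    have : A.1 0 0 = 0 := by omega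
    have : A.1 1 1 = 0 := by omega
    nlinarith
  | succ n ih =>
    intro A hA hsum
    set a := A.1 0 0 with ha
    set b := A.1 0 1 with hb
    set c := A.1 1 0 with hc
    set d := A.1 1 1 with hd
    have hdet : a * d - b * c = 1 := by
      have := A.2; rw [Matrix.det_fin_two] at this; exact this
    have h00 := hA 0 0; have h01 := hA 0 1; have h10 := hA 1 0; have h11 := hA 1 1
    rw [← ha] at h00; rw [← hb] at h01; rw [← hc] at h10; rw [← hd] at h11
    have hAeta : A.1 = !![a, b; c, d] := by
      rw [ha, hb, hc, hd]; exact Matrix.etaExpand_eq A.1 |>.symm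
    by_cases hc0 : c = 0
    · -- A = Smat ^ b
      have had : a * d = 1 := by rw [hc0] at hdet; linarith
      have ha1 : a = 1 ∧ d = 1 := by
        rcases Int.mul_eq_one_iff_eq_one_or_neg_one.1 had with ⟨h1, h2⟩ | ⟨h1, h2⟩
        · exact ⟨h1, h2⟩
        · omega
      have : A = Smat ^ b.toNat := by
        apply Subtype.ext
        rw [Smat_pow, hAeta, ha1.1, ha1.2, hc0, Int.toNat_of_nonneg h01]
      rw [this]
      exact pow_mem (Submonoid.subset_closure (Set.mem_insert _ _)) _
    by_cases hb0 : b = 0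
    · have had : a * d = 1 := by rw [hb0] at hdet; linarith
      have ha1 : a = 1 ∧ d = 1 := by
        rcases Int.mul_eq_one_iff_eq_one_or_neg_one.1 had with ⟨h1, h2⟩ | ⟨h1, h2⟩
        · exact ⟨h1, h2⟩
        · omega
      have : A = Tmat ^ c.toNat := by
        apply Subtype.ext
        rw [Tmat_pow, hAeta, ha1.1, ha1.2, hb0, Int.toNat_of_nonneg h10]
      rw [this]
      exact pow_mem (Submonoid.subset_closure (by simp)) _
    have hb1 : 1 ≤ b := by omega
    have hc1 : 1 ≤ c := by omega
    by_cases hS : c ≤ a ∧ d ≤ b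
    · -- A = Smat * B with B = !![a - c, b - d; c, d]
      obtain ⟨hca, hdb⟩ := hS
      set B : Matrix.SpecialLinearGroup (Fin 2) ℤ :=
        ⟨!![a - c, b - d; c, d], by simp [Matrix.det_fin_two_of]; linarith⟩ with hB
      have hAB : A = Smat * B := by
        apply Subtype.ext
        rw [Matrix.SpecialLinearGroup.coe_mul, hAeta]
        ext i j
        fin_cases i <;> fin_cases j <;>
          simp [Smat, hB, Matrix.mul_apply, Fin.sum_univ_two] <;> ring
      have hBnn : ∀ i j, 0 ≤ B.1 i j := by
        intro i j
        fin_cases i <;> fin_cases j <;> simp [hB] <;> omega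
      have hBsum : B.1 0 0 + B.1 0 1 + B.1 1 0 + B.1 1 1 ≤ (n : ℤ) := by
        have : B.1 0 0 + B.1 0 1 + B.1 1 0 + B.1 1 1 = a + b := by
          simp [hB]; ring
        rw [this]
        have : (↑(n + 1) : ℤ) = (n : ℤ) + 1 := by push_cast; ring
        omega
      rw [hAB]
      exact mul_mem (Submonoid.subset_closure (Set.mem_insert _ _)) (ih B hBnn hBsum)
    · push_neg at hS
      have hac : a ≤ c := by
        by_contra h
        push_neg at h
        have hbd := hS h.le
        nlinarith
      have hbd : b ≤ d := by
        by_contra h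
        push_neg at h
        rcases le_or_gt c a with h2 | h2
        · exact absurd (hS h2) (not_lt.2 h.le)
        · nlinarith
      set B : Matrix.SpecialLinearGroup (Fin 2) ℤ :=
        ⟨!![a, b; c - a, d - b], by simp [Matrix.det_fin_two_of]; linarith⟩ with hB
      have hAB : A = Tmat * B := by
        apply Subtype.ext
        rw [Matrix.SpecialLinearGroup.coe_mul, hAeta]
        ext i j
        fin_cases i <;> fin_cases j <;>
          simp [Tmat, hB, Matrix.mul_apply, Fin.sum_univ_two] <;> ring
      have hBnn : ∀ i j, 0 ≤ B.1 i j := by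
        intro i j
        fin_cases i <;> fin_cases j <;> simp [hB] <;> omega
      have ha1 : 1 ≤ a := by nlinarith
      have hBsum : B.1 0 0 + B.1 0 1 + B.1 1 0 + B.1 1 1 ≤ (n : ℤ) := by
        have : B.1 0 0 + B.1 0 1 + B.1 1 0 + B.1 1 1 = c + d := by
          simp [hB]; ring
        rw [this]
        have : (↑(n + 1) : ℤ) = (n : ℤ) + 1 := by push_cast; ring
        omega
      rw [hAB]
      exact mul_mem (Submonoid.subset_closure (by simp)) (ih B hBnn hBsum)

theorem sl2_nonneg_mem_closure (A : Matrix.SpecialLinearGroup (Fin 2) ℤ)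
    (hA : ∀ i j, 0 ≤ A.1 i j) :
    A ∈ Submonoid.closure ({Smat, Tmat} : Set (Matrix.SpecialLinearGroup (Fin 2) ℤ)) := by
  have h : 0 ≤ A.1 0 0 + A.1 0 1 + A.1 1 0 + A.1 1 1 := by
    have := hA 0 0; have := hA 0 1; have := hA 1 0; have := hA 1 1; linarith
  exact sl2_key (A.1 0 0 + A.1 0 1 + A.1 1 0 + A.1 1 1).toNat A hA (Int.toNat_of_nonneg h).ge
end
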